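/- arXiv:1410.5373 — 3 statements merged into one kernel-verified Lean document; each statement's English description precedes it below -/
import Mathlib

section
/- Let λ : ℕ → (0,∞) satisfy λ(n) = o(n) and converge to a finite positive limit, and let β(n) = log^{(K)} n for some finite integer K > 1. For each n, let C_n be a Bernoulli(p(n)) random m(n)×n test matrix with p(n) = 1/⌈β(n)·λ(n)⌉ and m(n) = ⌈e·(⌈β(n)·λ(n)⌉)²·log n⌉ = e·(β(n)·λ(n))²·log n·(1+o(1)), drawn independently of the defective set 𝒟_n of the Poisson PGT model on n subjects with parameter λ(n), and let D̂_n be the output of the cover decoder applied to C_n and the outcome vector. Then P(D̂_n ≠ 𝒟_n) → 0 as n → ∞. -/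
/-!
The cover decoder never discards a defective, so it errs only when some non-defective `i` is
covered, i.e. no test isolates `i` (contains `i` and no defective). Given `|𝒟| = d`, a test
isolates `i` with probability `p (1 - p)^d`, so independence of the tests and a union bound give
error at most `n (1 - p (1 - p)^B)^m` when `d ≤ B`. For `B = ⌈βλ⌉`, `p = 1/B` we have
`p (1 - p)^B ≥ e⁻²/B`, and `m ≥ e B² log n` makes this bound `≤ 1/n` once `B ≥ 6`. The event
`|𝒟| > B` has probability at most the Poisson tail `∑_{d > B} λ^d/d!`, which tends to `0` since
`B → ∞` while `λ` stays bounded.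
-/

open Filter Finset

/-- The `K`-fold iterated natural logarithm. -/
noncomputable def iterLog : ℕ → ℝ → ℝ
  | 0, x => x
  | (K + 1), x => Real.log (iterLog K x)

/-- `P(𝒟 = S)` in the Poisson PGT model on `n` subjects with parameter `lam`. -/
noncomputable def pgtWeight (n : ℕ) (lam : ℝ) (S : Finset (Fin n)) : ℝ :=
  (Real.exp lam / ∑ d ∈ Finset.range (n + 1), lam ^ d / d.factorial) *
    lam ^ S.card * Real.exp (-lam) * (n - S.card).factorial / n.factorial

/-- Probability of a realization `C` of an i.i.d. Bernoulli(p) random test matrix. -/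
noncomputable def bernWeight {m n : ℕ} (p : ℝ) (C : Fin m → Fin n → Bool) : ℝ :=
  ∏ j : Fin m, ∏ i : Fin n, if C j i then p else 1 - p

/-- Outcome vector: test `j` is positive iff some defective participates in it. -/
def outcome {m n : ℕ} (C : Fin m → Fin n → Bool) (S : Finset (Fin n)) : Fin m → Bool :=
  fun j => decide (∃ i ∈ S, C j i = true)

/-- The cover decoder: `D̂ = {i : supp(x_i) ⊆ supp(y)}`. -/
def coverDecoder {m n : ℕ} (C : Fin m → Fin n → Bool) (y : Fin m → Bool) : Finset (Fin n) :=
  Finset.univ.filter (fun i => ∀ j, C j i = true → y j = true)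

/-- Error probability of the cover decoder with an i.i.d. Bernoulli(p) test matrix of
`mn` tests, drawn independently of the defective set of the Poisson PGT model. -/
noncomputable def errProbCover (n mn : ℕ) (lam p : ℝ) : ℝ :=
  ∑ C : Fin mn → Fin n → Bool, ∑ S : Finset (Fin n),
    bernWeight p C * pgtWeight n lam S *
      (if coverDecoder C (outcome C S) ≠ S then 1 else 0)

section Bernoulli

variable {p : ℝ}

def bernProb (p : ℝ) (b : Bool) : ℝ := if b then p else 1 - p

lemma bernProb_nonneg (h0 : 0 ≤ p) (h1 : p ≤ 1) (b : Bool) : 0 ≤ bernProb p b := by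
  unfold bernProb
  split <;> linarith

lemma bernWeight_eq_prod {m n : ℕ} (C : Fin m → Fin n → Bool) :
    bernWeight p C = ∏ j, ∏ i, bernProb p (C j i) := rfl

lemma bernWeight_nonneg {m n : ℕ} (h0 : 0 ≤ p) (h1 : p ≤ 1) (C : Fin m → Fin n → Bool) :
    0 ≤ bernWeight p C :=
  prod_nonneg fun _ _ => prod_nonneg fun _ _ => bernProb_nonneg h0 h1 _

lemma sum_prod_bernProb_mul {ι : Type*} [Fintype ι] [DecidableEq ι] (f : ι → Bool → ℝ) :
    ∑ r : ι → Bool, ∏ i, bernProb p (r i) * f i (r i) =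
      ∏ i, (p * f i true + (1 - p) * f i false) := by
  rw [← Fintype.prod_sum fun i b => bernProb p b * f i b]
  simp [bernProb]

lemma sum_prod_bernProb {ι : Type*} [Fintype ι] [DecidableEq ι] :
    ∑ r : ι → Bool, ∏ i, bernProb p (r i) = 1 := by
  simpa using sum_prod_bernProb_mul (p := p) fun (_ : ι) _ => (1 : ℝ)

lemma sum_bernWeight_mul_prod_rows {m n : ℕ} (g : (Fin n → Bool) → ℝ) :
    ∑ C : Fin m → Fin n → Bool, bernWeight p C * ∏ j, g (C j) =
      (∑ r : Fin n → Bool, (∏ i, bernProb p (r i)) * g r) ^ m := by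
  rw [← Fin.prod_const, Fintype.prod_sum]
  simp only [bernWeight_eq_prod, ← prod_mul_distrib]

lemma sum_bernWeight {m n : ℕ} : ∑ C : Fin m → Fin n → Bool, bernWeight p C = 1 := by
  simpa [sum_prod_bernProb] using sum_bernWeight_mul_prod_rows (m := m) (p := p) fun _ => 1

end Bernoulli

section Isolation

variable {ι : Type*}

def Isolates (r : ι → Bool) (i : ι) (S : Finset ι) : Prop :=
  r i = true ∧ ∀ i' ∈ S, r i' = false

instance (r : ι → Bool) (i : ι) (S : Finset ι) : Decidable (Isolates r i S) :=
  inferInstanceAs (Decidable (_ ∧ _))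

lemma sum_prod_bernProb_mul_isolates [Fintype ι] [DecidableEq ι] {p : ℝ} {S : Finset ι} {i : ι}
    (hi : i ∉ S) :
    ∑ r : ι → Bool, (∏ i', bernProb p (r i')) * (if Isolates r i S then 1 else 0) =
      p * (1 - p) ^ #S := by
  let f : ι → Bool → ℝ := fun i' b => if (i' = i → b = true) ∧ (i' ∈ S → b = false) then 1 else 0
  have hind : ∀ r : ι → Bool,
      (if Isolates r i S then (1 : ℝ) else 0) = ∏ i', f i' (r i') := by
    intro r
    rw [Fintype.prod_boole]
    congr 1
    simp only [Isolates, eq_iff_iff]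
    grind
  have hfactor : ∀ i', p * f i' true + (1 - p) * f i' false =
      (if i' = i then p else 1) * (if i' ∈ S then 1 - p else 1) := by
    intro i'
    by_cases h : i' = i
    · subst h; simp [f, hi]
    · by_cases hS : i' ∈ S <;> simp [f, h, hS]
  simp only [hind, ← prod_mul_distrib, sum_prod_bernProb_mul, hfactor]
  rw [prod_mul_distrib, prod_ite_eq', prod_ite_mem, univ_inter, prod_const]
  simp

end Isolation

section CoverDecoder

variable {m n : ℕ} {C : Fin m → Fin n → Bool} {S : Finset (Fin n)} {i : Fin n}

lemma subset_coverDecoder_outcome : S ⊆ coverDecoder C (outcome C S) := fun i hi => by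
  simp only [coverDecoder, outcome, mem_filter, mem_univ, true_and, decide_eq_true_eq]
  exact fun j hj => ⟨i, hi, hj⟩

lemma mem_coverDecoder_outcome :
    i ∈ coverDecoder C (outcome C S) ↔ ∀ j, ¬ Isolates (C j) i S := by
  simp [coverDecoder, outcome, Isolates]

lemma coverDecoder_outcome_ne_iff :
    coverDecoder C (outcome C S) ≠ S ↔ ∃ i ∉ S, i ∈ coverDecoder C (outcome C S) := by
  rw [Ne, ← subset_coverDecoder_outcome.ge_iff_eq', not_subset]
  exact ⟨fun ⟨i, h, h'⟩ => ⟨i, h', h⟩, fun ⟨i, h, h'⟩ => ⟨i, h', h⟩⟩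

end CoverDecoder

section ConditionalError

variable {m n : ℕ} {p : ℝ}

/-- `P(D̂ ≠ 𝒟 | 𝒟 = S)`. -/
noncomputable def condErrCover (m : ℕ) (p : ℝ) (S : Finset (Fin n)) : ℝ :=
  ∑ C : Fin m → Fin n → Bool, bernWeight p C * if coverDecoder C (outcome C S) ≠ S then 1 else 0

lemma mul_one_sub_pow_le_one (h0 : 0 ≤ p) (h1 : p ≤ 1) (k : ℕ) : p * (1 - p) ^ k ≤ 1 :=
  mul_le_one₀ h1 (pow_nonneg (sub_nonneg.mpr h1) k) (pow_le_one₀ (by linarith) (by linarith))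

lemma errProbCover_eq_sum_pgtWeight_mul (lam : ℝ) :
    errProbCover n m lam p = ∑ S, pgtWeight n lam S * condErrCover m p S := by
  rw [errProbCover, sum_comm]
  simp only [condErrCover, mul_sum]
  exact sum_congr rfl fun _ _ => sum_congr rfl fun _ _ => by ring

lemma condErrCover_nonneg (h0 : 0 ≤ p) (h1 : p ≤ 1) (S : Finset (Fin n)) :
    0 ≤ condErrCover m p S :=
  sum_nonneg fun C _ => mul_nonneg (bernWeight_nonneg h0 h1 C) (by split_ifs <;> norm_num)

lemma condErrCover_le_one (h0 : 0 ≤ p) (h1 : p ≤ 1) (S : Finset (Fin n)) :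
    condErrCover m p S ≤ 1 := by
  calc condErrCover m p S ≤ ∑ C : Fin m → Fin n → Bool, bernWeight p C :=
        sum_le_sum fun C _ => mul_le_of_le_one_right (bernWeight_nonneg h0 h1 C)
          (by split_ifs <;> norm_num)
    _ = 1 := sum_bernWeight

/-- A non-defective `i` is misclassified iff none of the `m` independent tests isolates it. -/
lemma sum_bernWeight_mul_mem_coverDecoder {S : Finset (Fin n)} {i : Fin n} (hi : i ∉ S) :
    ∑ C : Fin m → Fin n → Bool,
        bernWeight p C * (if i ∈ coverDecoder C (outcome C S) then 1 else 0) =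
      (1 - p * (1 - p) ^ #S) ^ m := by
  have hind : ∀ C : Fin m → Fin n → Bool, (if i ∈ coverDecoder C (outcome C S) then 1 else 0) =
      ∏ j, (1 - if Isolates (C j) i S then (1 : ℝ) else 0) := by
    intro C
    calc (if i ∈ coverDecoder C (outcome C S) then 1 else 0)
        = ∏ j, if ¬ Isolates (C j) i S then (1 : ℝ) else 0 := by
          simp only [Fintype.prod_boole, mem_coverDecoder_outcome]; congr
      _ = _ := prod_congr rfl fun j _ => by split_ifs <;> norm_num
  rw [sum_congr rfl fun C _ => by rw [hind C],
    sum_bernWeight_mul_prod_rows fun r => 1 - if Isolates r i S then (1 : ℝ) else 0]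
  simp only [mul_sub, mul_one, sum_sub_distrib, sum_prod_bernProb,
    sum_prod_bernProb_mul_isolates hi]

lemma condErrCover_le_card_mul (h0 : 0 ≤ p) (h1 : p ≤ 1) (S : Finset (Fin n)) :
    condErrCover m p S ≤ n * (1 - p * (1 - p) ^ #S) ^ m := by
  have hunion : ∀ C : Fin m → Fin n → Bool,
      (if coverDecoder C (outcome C S) ≠ S then (1 : ℝ) else 0) ≤
        ∑ i ∈ Sᶜ, if i ∈ coverDecoder C (outcome C S) then 1 else 0 := by
    intro C
    split_ifs with hne
    · obtain ⟨i, hiS, hi⟩ := coverDecoder_outcome_ne_iff.mp hne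
      calc (1 : ℝ) = if i ∈ coverDecoder C (outcome C S) then 1 else 0 := (if_pos hi).symm
        _ ≤ _ := single_le_sum (f := fun i => if i ∈ coverDecoder C (outcome C S) then (1 : ℝ)
            else 0) (fun _ _ => by split_ifs <;> norm_num) (mem_compl.mpr hiS)
    · exact sum_nonneg fun _ _ => by split_ifs <;> norm_num
  calc condErrCover m p S
      ≤ ∑ C : Fin m → Fin n → Bool, ∑ i ∈ Sᶜ,
          bernWeight p C * if i ∈ coverDecoder C (outcome C S) then 1 else 0 := by
        simp only [condErrCover, ← mul_sum]
        exact sum_le_sum fun C _ => mul_le_mul_of_nonneg_left (hunion C) (bernWeight_nonneg h0 h1 C)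
    _ = #Sᶜ * (1 - p * (1 - p) ^ #S) ^ m := by
        rw [sum_comm, sum_congr rfl fun i hi => sum_bernWeight_mul_mem_coverDecoder
          (mem_compl.mp hi), sum_const, nsmul_eq_mul]
    _ ≤ n * (1 - p * (1 - p) ^ #S) ^ m := by
        gcongr
        · exact pow_nonneg (sub_nonneg.mpr (mul_one_sub_pow_le_one h0 h1 _)) m
        · exact_mod_cast (card_le_univ _).trans (Fintype.card_fin n).le

lemma condErrCover_le_add_indicator (h0 : 0 ≤ p) (h1 : p ≤ 1)
    (B : ℕ) (S : Finset (Fin n)) :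
    condErrCover m p S ≤ n * (1 - p * (1 - p) ^ B) ^ m + if B < #S then 1 else 0 := by
  have hpow : 0 ≤ (n : ℝ) * (1 - p * (1 - p) ^ B) ^ m :=
    mul_nonneg n.cast_nonneg (pow_nonneg (sub_nonneg.mpr (mul_one_sub_pow_le_one h0 h1 B)) m)
  split_ifs with hB
  · linarith [condErrCover_le_one (m := m) h0 h1 S]
  · calc condErrCover m p S ≤ n * (1 - p * (1 - p) ^ #S) ^ m := condErrCover_le_card_mul h0 h1 S
      _ ≤ n * (1 - p * (1 - p) ^ B) ^ m + 0 := by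
        rw [add_zero]
        have hk : (1 - p) ^ B ≤ (1 - p) ^ #S :=
          pow_le_pow_of_le_one (sub_nonneg.mpr h1) (by linarith) (le_of_not_gt hB)
        gcongr
        exact sub_nonneg.mpr (mul_one_sub_pow_le_one h0 h1 _)

end ConditionalError

section PoissonPGT

variable {n : ℕ} {lam : ℝ}

lemma one_le_sum_range_pow_div_factorial (hl : 0 ≤ lam) :
    1 ≤ ∑ d ∈ range (n + 1), lam ^ d / d.factorial := by
  simpa using single_le_sum (f := fun d => lam ^ d / (d.factorial : ℝ))
    (fun d _ => by positivity) (mem_range.mpr n.succ_pos)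

lemma pgtWeight_nonneg (hl : 0 ≤ lam) (S : Finset (Fin n)) : 0 ≤ pgtWeight n lam S := by
  have := one_le_sum_range_pow_div_factorial (n := n) hl
  unfold pgtWeight
  positivity

/-- Summing `pgtWeight` over the `n.choose d` sets of size `d` gives the truncated Poisson
weight of `d`. -/
lemma sum_pgtWeight_mul_card (f : ℕ → ℝ) :
    ∑ S : Finset (Fin n), pgtWeight n lam S * f #S =
      (∑ d ∈ range (n + 1), lam ^ d / d.factorial * f d) /
        ∑ d ∈ range (n + 1), lam ^ d / d.factorial := by
  unfold pgtWeight
  set Z := ∑ d ∈ range (n + 1), lam ^ d / d.factorial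
  have hlayer : ∀ d ∈ range (n + 1), (n.choose d : ℝ) *
      ((Real.exp lam / Z) * lam ^ d * Real.exp (-lam) * (n - d).factorial / n.factorial * f d) =
      lam ^ d / d.factorial * f d / Z := by
    intro d hd
    have hdn : d ≤ n := Nat.lt_succ_iff.mp (mem_range.mp hd)
    have hchoose : (n.choose d : ℝ) * d.factorial * (n - d).factorial = n.factorial := by
      exact_mod_cast Nat.choose_mul_factorial_mul_factorial hdn
    rw [Real.exp_neg]
    field_simp
    linear_combination (lam ^ d * f d / Z) * hchoose
  rw [← powerset_univ, sum_powerset_apply_card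
    (fun d => Real.exp lam / Z * lam ^ d * Real.exp (-lam) * (n - d).factorial / n.factorial *
      f d),
    card_univ, Fintype.card_fin, sum_div]
  exact sum_congr rfl fun d hd => by rw [nsmul_eq_mul, hlayer d hd]

lemma sum_pgtWeight (hl : 0 ≤ lam) : ∑ S : Finset (Fin n), pgtWeight n lam S = 1 := by
  have hZ := one_le_sum_range_pow_div_factorial (n := n) hl
  simpa [div_self (by positivity : (∑ d ∈ range (n + 1), lam ^ d / d.factorial) ≠ 0)]
    using sum_pgtWeight_mul_card (n := n) (lam := lam) fun _ => 1

lemma sum_pgtWeight_mul_card_gt_le (hl : 0 ≤ lam) (B : ℕ) :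
    ∑ S : Finset (Fin n), pgtWeight n lam S * (if B < #S then 1 else 0) ≤
      ∑ d ∈ range (n + 1) with B < d, lam ^ d / d.factorial := by
  have hZ := one_le_sum_range_pow_div_factorial (n := n) hl
  rw [sum_pgtWeight_mul_card fun d => if B < d then 1 else 0, div_le_iff₀ (by positivity)]
  simp only [mul_ite, mul_one, mul_zero, ← sum_filter]
  exact le_mul_of_one_le_right (sum_nonneg fun d _ => by positivity) hZ

end PoissonPGT

lemma errProbCover_le {n m : ℕ} {lam p : ℝ} (hl : 0 ≤ lam) (h0 : 0 ≤ p) (h1 : p ≤ 1) (B : ℕ) :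
    errProbCover n m lam p ≤
      n * (1 - p * (1 - p) ^ B) ^ m + ∑ d ∈ range (n + 1) with B < d, lam ^ d / d.factorial := by
  rw [errProbCover_eq_sum_pgtWeight_mul]
  calc ∑ S, pgtWeight n lam S * condErrCover m p S
      ≤ ∑ S, pgtWeight n lam S * (n * (1 - p * (1 - p) ^ B) ^ m + if B < #S then 1 else 0) :=
        sum_le_sum fun S _ => mul_le_mul_of_nonneg_left
          (condErrCover_le_add_indicator h0 h1 B S) (pgtWeight_nonneg hl S)
    _ = n * (1 - p * (1 - p) ^ B) ^ m +
          ∑ S, pgtWeight n lam S * (if B < #S then 1 else 0) := by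
        simp only [mul_add, sum_add_distrib, ← sum_mul, sum_pgtWeight hl, one_mul]
    _ ≤ _ := add_le_add_right (sum_pgtWeight_mul_card_gt_le hl B) _

lemma errProbCover_nonneg {n m : ℕ} {lam p : ℝ} (hl : 0 ≤ lam) (h0 : 0 ≤ p) (h1 : p ≤ 1) :
    0 ≤ errProbCover n m lam p := by
  rw [errProbCover_eq_sum_pgtWeight_mul]
  exact sum_nonneg fun S _ => mul_nonneg (pgtWeight_nonneg hl S) (condErrCover_nonneg h0 h1 S)

section Asymptotics

open Real

lemma sum_filter_lt_pow_div_factorial_le {x y : ℝ} (hx : 0 ≤ x) (hxy : x ≤ y) (B N : ℕ) :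
    ∑ d ∈ range N with B < d, x ^ d / d.factorial ≤
      exp y - ∑ d ∈ range (B + 1), y ^ d / d.factorial := by
  have hy : 0 ≤ y := hx.trans hxy
  have hdisj : Disjoint ((range N).filter (B < ·)) (range (B + 1)) :=
    disjoint_left.mpr fun d hd hd' => by
      simp only [mem_filter, mem_range] at hd hd'
      omega
  have hsub : (range N).filter (B < ·) ∪ range (B + 1) ⊆ range (N + B + 1) := by
    intro d hd
    simp only [mem_union, mem_filter, mem_range] at hd ⊢
    omega
  calc ∑ d ∈ range N with B < d, x ^ d / d.factorial
      ≤ ∑ d ∈ range N with B < d, y ^ d / d.factorial :=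
        sum_le_sum fun d _ => by gcongr
    _ ≤ ∑ d ∈ range (N + B + 1), y ^ d / d.factorial -
          ∑ d ∈ range (B + 1), y ^ d / d.factorial := by
        rw [le_sub_iff_add_le, ← sum_union hdisj]
        exact sum_le_sum_of_subset_of_nonneg hsub fun d _ _ => by positivity
    _ ≤ exp y - ∑ d ∈ range (B + 1), y ^ d / d.factorial := by
        gcongr
        exact sum_le_exp_of_nonneg hy _

lemma tendsto_exp_sub_sum_range_pow_div_factorial (x : ℝ) :
    Tendsto (fun k => exp x - ∑ d ∈ range k, x ^ d / d.factorial) atTop (nhds 0) := by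
  have h := (NormedSpace.expSeries_div_hasSum_exp x).tendsto_sum_nat
  rw [← exp_eq_exp_ℝ] at h
  simpa using (tendsto_const_nhds (x := exp x)).sub h

lemma exp_neg_two_mul_le_one_sub {x : ℝ} (hx0 : 0 ≤ x) (hx : x ≤ 1 / 2) :
    exp (-(2 * x)) ≤ 1 - x := by
  have hprod : exp (-(2 * x)) * exp (2 * x) = 1 := by rw [← exp_add, neg_add_cancel, exp_zero]
  nlinarith [add_one_le_exp (2 * x), exp_pos (-(2 * x)),
    mul_le_mul_of_nonneg_left (add_one_le_exp (2 * x)) (exp_pos (-(2 * x))).le]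

lemma exp_neg_two_le_one_sub_inv_pow {b : ℕ} (hb : 2 ≤ b) : exp (-2) ≤ (1 - 1 / b) ^ b := by
  have hb' : (2 : ℝ) ≤ b := by exact_mod_cast hb
  calc exp (-2) = exp (-(2 * (1 / b))) ^ b := by
        rw [← exp_nat_mul]
        field_simp
    _ ≤ (1 - 1 / b) ^ b := by
        gcongr
        exact exp_neg_two_mul_le_one_sub (by positivity) (by rw [div_le_div_iff₀] <;> linarith)

lemma natCast_mul_one_sub_pow_le_inv {n m : ℕ} {q : ℝ} (hq : q ≤ 1) (hqm : 2 * log n ≤ q * m) :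
    n * (1 - q) ^ m ≤ (n : ℝ)⁻¹ := by
  rcases n.eq_zero_or_pos with rfl | hn
  · simp
  have hn' : (0 : ℝ) < n := by exact_mod_cast hn
  have hexp : exp (-(2 * log n)) = (n : ℝ)⁻¹ / n := by
    rw [exp_neg, show 2 * log n = log ((n : ℝ) ^ 2) by rw [log_pow]; norm_num,
      exp_log (by positivity)]
    field_simp
  calc n * (1 - q) ^ m ≤ n * exp (-q) ^ m := by
        gcongr
        exact one_sub_le_exp_neg q
    _ ≤ n * exp (-(2 * log n)) := by
        rw [← exp_nat_mul]
        gcongr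
        linarith
    _ = (n : ℝ)⁻¹ := by rw [hexp]; field_simp

/-- With `b ≥ 6 > 2e` tests per defective, `p = 1/b` and `m ≥ e b² log n` tests, each test
isolates a given non-defective with probability `≥ e⁻²/b`, so `m` of them fail with probability
`≤ n⁻²`. -/
lemma natCast_mul_one_sub_isolationProb_pow_le_inv {n m b : ℕ} (hb : 6 ≤ b)
    (hm : exp 1 * b ^ 2 * log n ≤ m) :
    n * (1 - 1 / b * (1 - 1 / b) ^ b) ^ m ≤ (n : ℝ)⁻¹ := by
  have hb' : (6 : ℝ) ≤ b := by exact_mod_cast hb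
  have hp1 : 1 / (b : ℝ) ≤ 1 := by rw [div_le_one] <;> linarith
  have hq : exp (-2) / b ≤ 1 / b * (1 - 1 / b) ^ b := by
    rw [div_eq_mul_one_div, mul_comm]
    exact mul_le_mul_of_nonneg_left (exp_neg_two_le_one_sub_inv_pow (by omega)) (by positivity)
  have hb_exp : 2 ≤ exp (-1) * b := by
    rw [exp_neg, ← div_eq_inv_mul, le_div_iff₀ (exp_pos 1)]
    linarith [exp_one_lt_d9]
  refine natCast_mul_one_sub_pow_le_inv (mul_one_sub_pow_le_one (by positivity) hp1 b) ?_
  have hlog := log_natCast_nonneg n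
  calc 2 * log n ≤ exp (-1) * b * log n := by gcongr
    _ = exp (-2) / b * (exp 1 * b ^ 2 * log n) := by
        rw [show (-1 : ℝ) = -2 + 1 by norm_num, exp_add]
        field_simp
    _ ≤ 1 / b * (1 - 1 / b) ^ b * m := by gcongr

end Asymptotics

lemma errProbCover_le_inv_add {n m b : ℕ} {lam M : ℝ} (hl : 0 ≤ lam) (hlM : lam ≤ M) (hb : 6 ≤ b)
    (hm : Real.exp 1 * b ^ 2 * Real.log n ≤ m) :
    errProbCover n m lam (1 / b) ≤
      (n : ℝ)⁻¹ + (Real.exp M - ∑ d ∈ range (b + 1), M ^ d / d.factorial) := by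
  have hb' : (1 : ℝ) ≤ b := by exact_mod_cast (by omega : 1 ≤ b)
  refine (errProbCover_le hl (by positivity) (by rw [div_le_one] <;> linarith) b).trans ?_
  exact add_le_add (natCast_mul_one_sub_isolationProb_pow_le_inv hb hm)
    (sum_filter_lt_pow_div_factorial_le hl hlM b (n + 1))

lemma tendsto_iterLog_atTop (K : ℕ) : Tendsto (iterLog K) atTop atTop := by
  induction K with
  | zero => exact tendsto_id
  | succ K ih => exact Real.tendsto_log_atTop.comp ih

theorem stmt2_general (lam : ℕ → ℝ)
    (hlamlim : ∃ L : ℝ, 0 < L ∧ Tendsto lam atTop (nhds L))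
    (K : ℕ)
    (β : ℕ → ℝ) (hβ : ∀ n, β n = iterLog K n)
    (p : ℕ → ℝ) (hp : ∀ n, p n = 1 / (⌈β n * lam n⌉₊ : ℝ))
    (m : ℕ → ℕ)
    (hm : ∀ n, m n = ⌈Real.exp 1 * (⌈β n * lam n⌉₊ : ℝ) ^ 2 * Real.log n⌉₊) :
    Tendsto (fun n => errProbCover n (m n) (lam n) (p n)) atTop (nhds 0) := by
  obtain ⟨L, hL, hlim⟩ := hlamlim
  set b : ℕ → ℕ := fun n => ⌈β n * lam n⌉₊
  have hβ_top : Tendsto β atTop atTop := by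
    rw [funext hβ]
    exact (tendsto_iterLog_atTop K).comp tendsto_natCast_atTop_atTop
  have hb_top : Tendsto b atTop atTop := tendsto_nat_ceil_atTop.comp (hβ_top.atTop_mul_pos hL hlim)
  have hlim_bound : Tendsto (fun n : ℕ => (n : ℝ)⁻¹ +
      (Real.exp (L + 1) - ∑ d ∈ range (b n + 1), (L + 1) ^ d / d.factorial)) atTop (nhds 0) := by
    simpa using tendsto_inv_atTop_nhds_zero_nat.add
      ((tendsto_exp_sub_sum_range_pow_div_factorial (L + 1)).comp
        ((tendsto_add_atTop_nat 1).comp hb_top))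
  have hgood : ∀ᶠ n in atTop, 0 ≤ lam n ∧ lam n ≤ L + 1 ∧ 6 ≤ b n := by
    filter_upwards [hlim.eventually (lt_mem_nhds hL),
      hlim.eventually (gt_mem_nhds (lt_add_one L)), hb_top.eventually_ge_atTop 6] with n h0 hM hb
    exact ⟨h0.le, hM.le, hb⟩
  refine squeeze_zero' ?_ ?_ hlim_bound
  · filter_upwards [hgood] with n ⟨hl, _, hb⟩
    have hb' : (1 : ℝ) ≤ b n := by exact_mod_cast (by omega : 1 ≤ b n)
    rw [hp n]
    exact errProbCover_nonneg hl (by positivity) (by rw [div_le_one] <;> linarith)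
  · filter_upwards [hgood] with n ⟨hl, hlM, hb⟩
    rw [hp n, hm n]
    exact errProbCover_le_inv_add hl hlM hb (Nat.le_ceil _)

theorem stmt2 (lam : ℕ → ℝ) (hpos : ∀ n, 0 < lam n)
    (hlamo : Tendsto (fun n => lam n / n) atTop (nhds 0))
    (hlamlim : ∃ L : ℝ, 0 < L ∧ Tendsto lam atTop (nhds L))
    (K : ℕ) (hK : 1 < K)
    (β : ℕ → ℝ) (hβ : ∀ n, β n = iterLog K n)
    (p : ℕ → ℝ) (hp : ∀ n, p n = 1 / (⌈β n * lam n⌉₊ : ℝ))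
    (m : ℕ → ℕ)
    (hm : ∀ n, m n = ⌈Real.exp 1 * (⌈β n * lam n⌉₊ : ℝ) ^ 2 * Real.log n⌉₊) :
    Tendsto (fun n => errProbCover n (m n) (lam n) (p n)) atTop (nhds 0) :=
  stmt2_general lam hlamlim K β hβ p hp m hm
end

section
/- Let λ > 0, let 0 < ε < 1, and let n ∈ ℕ satisfy λ(1+ε) ≤ n. Let c = e^{λ}/(Σ_{d=0}^{n} λ^d/d!), f₁(ε) = (1+ε)·log(1+ε) − ε, and f₂(ε) = (1−ε)·log(1−ε) + ε. Then the right-truncated Poisson distribution with parameters λ and n satisfies Σ_{d ∈ ℕ, λ(1−ε) ≤ d ≤ λ(1+ε)} c·(λ^d/d!)·e^{−λ} ≥ c·(1 − e^{−λ·f₁(ε)} − e^{−λ·f₂(ε)}). -/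
/-! The complement of the window `[λ(1-ε), λ(1+ε)]` is covered by the two tails, so the Poisson
mass of the window is at least `1` minus the two tail masses. Each tail is bounded by Chernoff's
argument: on the tail `d ≥ a` (resp. `d ≤ a`) the indicator is at most `e^{t(d-a)}` for `t ≥ 0`
(resp. `t ≤ 0`), and the Poisson moment generating function is `e^{λ(e^t-1)}`; the choices
`t = log(1 ± ε)` give exactly `e^{-λ f₁(ε)}` and `e^{-λ f₂(ε)}`. Finally multiply by `c ≥ 0`. -/

open Real Set

noncomputable def poissonWeight (lam : ℝ) (d : ℕ) : ℝ := lam ^ d / d.factorial * exp (-lam)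

lemma poissonWeight_nonneg {lam : ℝ} (hlam : 0 ≤ lam) (d : ℕ) : 0 ≤ poissonWeight lam d := by
  unfold poissonWeight; positivity

lemma hasSum_exp_mul_poissonWeight (lam t : ℝ) :
    HasSum (fun d : ℕ => exp (t * d) * poissonWeight lam d) (exp (lam * (exp t - 1))) := by
  have h := (NormedSpace.expSeries_div_hasSum_exp (lam * exp t)).mul_right (exp (-lam))
  rw [← exp_eq_exp_ℝ, ← exp_add, show lam * exp t + -lam = lam * (exp t - 1) by ring] at h
  refine h.congr_fun fun d => ?_
  rw [poissonWeight, mul_pow, ← exp_nat_mul, mul_comm (d : ℝ) t]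
  ring

lemma hasSum_poissonWeight (lam : ℝ) : HasSum (poissonWeight lam) 1 := by
  simpa using hasSum_exp_mul_poissonWeight lam 0

lemma tsum_indicator_poissonWeight_le_exp {lam : ℝ} (hlam : 0 ≤ lam) (t a : ℝ) {s : Set ℕ}
    (hs : ∀ d ∈ s, t * a ≤ t * d) :
    ∑' d, s.indicator (poissonWeight lam) d ≤ exp (lam * (exp t - 1) - t * a) := by
  have hmgf := (hasSum_exp_mul_poissonWeight lam t).mul_left (exp (-(t * a)))
  rw [← exp_add, neg_add_eq_sub] at hmgf
  refine hasSum_le (fun d => ?_) ((hasSum_poissonWeight lam).summable.indicator s).hasSum hmgf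
  by_cases hd : d ∈ s
  · have hexp : 1 ≤ exp (-(t * a)) * exp (t * d) := by
      rw [← exp_add]; exact one_le_exp (by linarith [hs d hd])
    rw [indicator_of_mem hd, ← mul_assoc]
    exact le_mul_of_one_le_left (poissonWeight_nonneg hlam d) hexp
  · rw [indicator_of_notMem hd]
    have := poissonWeight_nonneg hlam d
    positivity

lemma tsum_poissonWeight_upper_tail_le {lam ε : ℝ} (hlam : 0 ≤ lam) (hε : 0 ≤ ε) :
    ∑' d, {d : ℕ | lam * (1 + ε) < d}.indicator (poissonWeight lam) d
      ≤ exp (-(lam * ((1 + ε) * log (1 + ε) - ε))) := by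
  refine (tsum_indicator_poissonWeight_le_exp hlam (log (1 + ε)) (lam * (1 + ε))
    fun d hd => mul_le_mul_of_nonneg_left (le_of_lt hd) (log_nonneg (by linarith))).trans_eq ?_
  rw [exp_log (by linarith)]
  ring_nf

lemma tsum_poissonWeight_lower_tail_le {lam ε : ℝ} (hlam : 0 ≤ lam) (hε0 : 0 ≤ ε) (hε1 : ε < 1) :
    ∑' d, {d : ℕ | d < lam * (1 - ε)}.indicator (poissonWeight lam) d
      ≤ exp (-(lam * ((1 - ε) * log (1 - ε) + ε))) := by
  refine (tsum_indicator_poissonWeight_le_exp hlam (log (1 - ε)) (lam * (1 - ε))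
    fun d hd => mul_le_mul_of_nonpos_left (le_of_lt hd)
      (log_nonpos (by linarith) (by linarith))).trans_eq ?_
  rw [exp_log (by linarith)]
  ring_nf

lemma one_sub_tsum_indicator_sub_le {β : Type*} {f : β → ℝ} (hf : HasSum f 1)
    (hf0 : ∀ b, 0 ≤ f b) {s A B : Set β} (hcover : sᶜ ⊆ A ∪ B) :
    1 - ∑' b, A.indicator f b - ∑' b, B.indicator f b ≤ ∑' b, s.indicator f b := by
  have hsum : ∀ t : Set β, HasSum (t.indicator f) (∑' b, t.indicator f b) :=
    fun t => (hf.summable.indicator t).hasSum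
  have hcovered : ∀ b, f b ≤ s.indicator f b + A.indicator f b + B.indicator f b := by
    intro b
    have hnn : ∀ t : Set β, 0 ≤ t.indicator f b := fun t => indicator_nonneg (fun b _ => hf0 b) b
    by_cases hs : b ∈ s
    · rw [indicator_of_mem hs]; linarith [hnn A, hnn B]
    · rcases hcover hs with hA | hB
      · rw [indicator_of_mem hA]; linarith [hnn s, hnn B]
      · rw [indicator_of_mem hB]; linarith [hnn s, hnn A]
  linarith [hasSum_le hcovered hf (((hsum s).add (hsum A)).add (hsum B))]

theorem stmt15_general (lam ε : ℝ) (n : ℕ) (hlam : 0 < lam) (hε0 : 0 < ε) (hε1 : ε < 1)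
    (c : ℝ)
    (hc : c = Real.exp lam / ∑ d ∈ Finset.range (n + 1), lam ^ d / d.factorial) :
    c * (1 - Real.exp (-(lam * ((1 + ε) * Real.log (1 + ε) - ε)))
          - Real.exp (-(lam * ((1 - ε) * Real.log (1 - ε) + ε))))
      ≤ ∑' d : ℕ, if lam * (1 - ε) ≤ (d : ℝ) ∧ (d : ℝ) ≤ lam * (1 + ε)
          then c * (lam ^ d / d.factorial) * Real.exp (-lam) else 0 := by
  have hc0 : 0 ≤ c := by rw [hc]; positivity
  have hcover : {d : ℕ | lam * (1 - ε) ≤ d ∧ d ≤ lam * (1 + ε)}ᶜ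
      ⊆ {d : ℕ | d < lam * (1 - ε)} ∪ {d : ℕ | lam * (1 + ε) < d} := by
    intro d hd
    simp only [mem_compl_iff, mem_ofPred_eq, not_and_or, not_le] at hd
    exact hd
  have hcentral := one_sub_tsum_indicator_sub_le (hasSum_poissonWeight lam)
    (poissonWeight_nonneg hlam.le) hcover
  calc _ ≤ c * ∑' d, {d : ℕ | lam * (1 - ε) ≤ d ∧ d ≤ lam * (1 + ε)}.indicator
        (poissonWeight lam) d := by
        gcongr
        linarith [tsum_poissonWeight_upper_tail_le hlam.le hε0.le,
          tsum_poissonWeight_lower_tail_le hlam.le hε0.le hε1]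
    _ = _ := by
        rw [← tsum_mul_left]
        congr 1 with d
        simp only [indicator_apply, mem_ofPred_eq, mul_ite, mul_zero, poissonWeight, mul_assoc]

theorem stmt15 (lam ε : ℝ) (n : ℕ) (hlam : 0 < lam) (hε0 : 0 < ε) (hε1 : ε < 1)
    (hn : lam * (1 + ε) ≤ n)
    (c : ℝ)
    (hc : c = Real.exp lam / ∑ d ∈ Finset.range (n + 1), lam ^ d / d.factorial) :
    c * (1 - Real.exp (-(lam * ((1 + ε) * Real.log (1 + ε) - ε)))
          - Real.exp (-(lam * ((1 - ε) * Real.log (1 - ε) + ε))))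
      ≤ ∑' d : ℕ, if lam * (1 - ε) ≤ (d : ℝ) ∧ (d : ℝ) ≤ lam * (1 + ε)
          then c * (lam ^ d / d.factorial) * Real.exp (-lam) else 0 :=
  stmt15_general lam ε n hlam hε0 hε1 c hc
end

section
/- Let m, n, Δ, v be nonnegative integers with Δ + 1 ≤ n, let 0 < p < 1, set π = p·(1−p)^Δ, and assume 2v < m·π. Let C be a random m×n binary matrix whose entries are i.i.d. Bernoulli(p). Then the probability that C fails to be a Δ-disjunct matrix capable of correcting v errors — i.e., the probability that there exist a (Δ+1)-element set I of column indices and an index k ∈ I such that fewer than 2v+1 rows j satisfy C(j,k) = 1 and C(j,l) = 0 for all l ∈ I∖{k} — is at most (Δ+1)·C(n, Δ+1)·exp(−(m·π/2)·(1 − 2v/(m·π))²). -/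
open Finset

/-!
The rows of `C` are i.i.d., and for fixed `I` and `k ∈ I` a row isolates `k` in `I` with
probability `π = p (1 - p)^Δ`. The number of isolating rows is therefore binomial with mean
`m π`, and the Chernoff bound `P(N ≤ s) ≤ exp (-(m π / 2) (1 - s / (m π))²)` applies with
`s = 2v`. A union bound over the `C(n, Δ+1)` sets `I` and the `Δ + 1` choices of `k` finishes.
-/

section

open Real

lemma exp_neg_le_one_sub_add_sq_div_two {t : ℝ} (ht : 0 ≤ t) :
    exp (-t) ≤ 1 - t + t ^ 2 / 2 := by
  have hmul : exp (-t) * exp t = 1 := by rw [← exp_add, neg_add_cancel, exp_zero]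
  -- `(1 - t + t²/2) (1 + t + t²/2) = 1 + t⁴/4`
  nlinarith [quadratic_le_exp_of_nonneg ht, exp_pos (-t), sq_nonneg (t ^ 2)]

lemma ite_le_exp_mul_sub {N s t : ℝ} (ht : 0 ≤ t) :
    (if N ≤ s then (1 : ℝ) else 0) ≤ exp (t * (s - N)) := by
  split_ifs with h
  · exact one_le_exp (mul_nonneg ht (sub_nonneg.2 h))
  · positivity

lemma exp_neg_mul_card_filter {α : Type*} (G : α → Prop) [DecidablePred G] (t : ℝ) {m : ℕ}
    (C : Fin m → α) :
    exp (-t * #{j | G (C j)}) = ∏ j, if G (C j) then exp (-t) else 1 := by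
  rw [prod_ite, prod_const, prod_const_one, mul_one, ← exp_nat_mul, mul_comm]

section Chernoff

variable {α : Type*} [Fintype α] (w : α → ℝ) (G : α → Prop) [DecidablePred G]

lemma sum_prod_mul_exp_neg_mul_card (m : ℕ) (t : ℝ) :
    ∑ C : Fin m → α, (∏ j, w (C j)) * exp (-t * #{j | G (C j)})
      = (∑ a, w a * if G a then exp (-t) else 1) ^ m := by
  simp_rw [exp_neg_mul_card_filter, ← prod_mul_distrib]
  exact (Fintype.sum_pow (fun a => w a * if G a then exp (-t) else 1) m).symm

variable {w G} (hw : ∀ a, 0 ≤ w a) (hw1 : ∑ a, w a = 1) {q : ℝ} (hq : ∑ a with G a, w a = q)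
include hw hw1 hq

lemma sum_prod_mul_exp_neg_mul_card_le (m : ℕ) (t : ℝ) :
    ∑ C : Fin m → α, (∏ j, w (C j)) * exp (-t * #{j | G (C j)})
      ≤ exp (-(m * q) * (1 - exp (-t))) := by
  have hsum : ∑ a, w a * (if G a then exp (-t) else 1) = 1 - q * (1 - exp (-t)) := by
    have h : ∀ a, w a * (if G a then exp (-t) else 1)
        = w a - (if G a then w a else 0) * (1 - exp (-t)) := by
      intro a; split_ifs <;> ring
    simp_rw [h, sum_sub_distrib, ← sum_mul, ← sum_filter, hq, hw1]
  have hq0 : 0 ≤ q := hq ▸ sum_nonneg fun a _ => hw a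
  have hq1 : q ≤ 1 :=
    hq ▸ hw1 ▸ sum_le_sum_of_subset_of_nonneg (filter_subset _ _) fun a _ _ => hw a
  rw [sum_prod_mul_exp_neg_mul_card, hsum,
    show -(m * q) * (1 - exp (-t)) = m * (-(q * (1 - exp (-t)))) by ring, exp_nat_mul]
  gcongr
  · nlinarith [exp_pos (-t)]
  · linarith [add_one_le_exp (-(q * (1 - exp (-t))))]

theorem sum_prod_mul_ite_card_le_le_exp {m : ℕ} {s : ℝ} (hmq : 0 < m * q) (hs : s ≤ m * q) :
    ∑ C : Fin m → α, (∏ j, w (C j)) * (if (#{j | G (C j)} : ℝ) ≤ s then 1 else 0)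
      ≤ exp (-(m * q / 2) * (1 - s / (m * q)) ^ 2) := by
  -- `t` minimises `t s - m q (t - t² / 2)`, the exponent after the quadratic bound on `exp (-t)`
  set t := 1 - s / (m * q)
  have ht : 0 ≤ t := sub_nonneg.2 ((div_le_one hmq).2 hs)
  have hmqt : m * q * t = m * q - s := by rw [mul_sub, mul_one, mul_div_cancel₀ _ hmq.ne']
  calc
    _ ≤ ∑ C : Fin m → α, (∏ j, w (C j)) * (exp (t * s) * exp (-t * #{j | G (C j)})) := by
      gcongr with C
      · exact prod_nonneg fun j _ => hw _
      · rw [← exp_add]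
        exact (ite_le_exp_mul_sub ht).trans_eq (congrArg exp (by ring))
    _ = exp (t * s) * ∑ C : Fin m → α, (∏ j, w (C j)) * exp (-t * #{j | G (C j)}) := by
      rw [mul_sum]; congr! 1 with C; ring
    _ ≤ exp (t * s) * exp (-(m * q) * (1 - exp (-t))) := by
      gcongr; exact sum_prod_mul_exp_neg_mul_card_le hw hw1 hq m t
    _ ≤ exp (-(m * q / 2) * t ^ 2) := by
      rw [← exp_add]
      gcongr
      nlinarith [mul_le_mul_of_nonneg_left (exp_neg_le_one_sub_add_sq_div_two ht) hmq.le]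

end Chernoff

end

lemma sum_mul_ite_exists_le {β ι : Type*} [Fintype β] {w : β → ℝ} (hw : ∀ b, 0 ≤ w b)
    (s : Finset ι) (P : ι → β → Prop) [∀ i, DecidablePred (P i)]
    [∀ b, Decidable (∃ i ∈ s, P i b)] :
    ∑ b, w b * (if ∃ i ∈ s, P i b then 1 else 0)
      ≤ ∑ i ∈ s, ∑ b, w b * (if P i b then 1 else 0) := by
  rw [sum_comm]
  gcongr with b
  rw [← mul_sum]
  gcongr
  · exact hw b
  split_ifs with h
  · obtain ⟨i, hi, hPi⟩ := h
    refine le_trans ?_ (single_le_sum (fun j _ => ?_) hi)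
    · simp [hPi]
    · positivity
  · exact sum_nonneg fun j _ => by positivity

section RowWeight

variable {ι : Type*} [Fintype ι]

noncomputable def rowWeight (p : ℝ) (r : ι → Bool) : ℝ :=
  ∏ i, if r i then p else 1 - p

lemma bernWeight_eq_prod_rowWeight {m n : ℕ} (p : ℝ) (C : Fin m → Fin n → Bool) :
    bernWeight p C = ∏ j, rowWeight p (C j) := rfl

lemma rowWeight_nonneg {p : ℝ} (hp0 : 0 ≤ p) (hp1 : p ≤ 1) (r : ι → Bool) :
    0 ≤ rowWeight p r :=
  prod_nonneg fun i _ => by split_ifs <;> linarith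

variable [DecidableEq ι]

lemma sum_rowWeight (p : ℝ) : ∑ r : ι → Bool, rowWeight p r = 1 := by
  simp only [rowWeight]
  rw [← Fintype.prod_sum fun (_ : ι) (b : Bool) => if b then p else 1 - p]
  simp

lemma sum_rowWeight_filter_isolating (p : ℝ) {I : Finset ι} {k : ι} (hk : k ∈ I) :
    ∑ r with r k = true ∧ ∀ l ∈ I, l ≠ k → r l = false, rowWeight p r
      = p * (1 - p) ^ (#I - 1) := by
  set t : ∀ i : ι, Finset Bool := fun i => if i ∈ I then {decide (i = k)} else univ
  have hpi : ({r | r k = true ∧ ∀ l ∈ I, l ≠ k → r l = false} : Finset (ι → Bool))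
      = Fintype.piFinset t := by
    ext r
    simp only [mem_filter, mem_univ, true_and, Fintype.mem_piFinset, t]
    constructor
    · rintro ⟨hrk, hrl⟩ i
      split_ifs with hi
      · by_cases hik : i = k <;> simp_all
      · exact mem_univ _
    · intro h
      exact ⟨by simpa [hk] using h k, fun l hl hlk => by simpa [hl, hlk] using h l⟩
  have hmarginal : ∀ i, ∑ b ∈ t i, (if b then p else 1 - p)
      = if i ∈ I then (if i = k then p else 1 - p) else 1 := by
    intro i
    by_cases hi : i ∈ I
    · by_cases hik : i = k <;> simp [t, hi, hik, hk]
    · simp [t, hi]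
  simp only [hpi, rowWeight]
  rw [← prod_univ_sum t fun _ (b : Bool) => if b then p else 1 - p,
    prod_congr rfl fun i _ => hmarginal i, Fintype.prod_ite_mem, ← mul_prod_erase I _ hk,
    if_pos rfl, prod_congr rfl fun i hi => if_neg (ne_of_mem_erase hi), prod_const,
    card_erase_of_mem hk]

end RowWeight

theorem stmt19_general (m n Δ v : ℕ) (p : ℝ) (hp0 : 0 < p) (hp1 : p < 1)
    (π : ℝ) (hπ : π = p * (1 - p) ^ Δ) (hv : 2 * (v : ℝ) < m * π) :
    (∑ C : Fin m → Fin n → Bool,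
      bernWeight p C *
        (if ∃ I : Finset (Fin n), I.card = Δ + 1 ∧ ∃ k ∈ I,
            (Finset.univ.filter (fun j : Fin m =>
              C j k = true ∧ ∀ l ∈ I, l ≠ k → C j l = false)).card < 2 * v + 1
         then 1 else 0))
      ≤ (Δ + 1 : ℝ) * (n.choose (Δ + 1) : ℝ) *
          Real.exp (-(m * π / 2) * (1 - 2 * v / (m * π)) ^ 2) := by
  have hW : ∀ C : Fin m → Fin n → Bool, 0 ≤ bernWeight p C := fun C =>
    prod_nonneg fun j _ => rowWeight_nonneg hp0.le hp1.le (C j)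
  have hpair : ∀ I ∈ powersetCard (Δ + 1) (univ : Finset (Fin n)), ∀ k ∈ I,
      ∑ C : Fin m → Fin n → Bool, bernWeight p C *
        (if #{j | C j k = true ∧ ∀ l ∈ I, l ≠ k → C j l = false} < 2 * v + 1 then 1 else 0)
        ≤ Real.exp (-(m * π / 2) * (1 - 2 * v / (m * π)) ^ 2) := by
    intro I hI k hk
    have hq : ∑ r with r k = true ∧ ∀ l ∈ I, l ≠ k → r l = false, rowWeight p r = π := by
      rw [hπ, ← Nat.add_sub_cancel Δ 1, ← mem_powersetCard_univ.1 hI]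
      -- only the `Decidable` instances differ: `Nat.decidableForallFin` here, the `Fintype` one there
      convert sum_rowWeight_filter_isolating p hk
    have hcard : ∀ N : ℕ, N < 2 * v + 1 ↔ (N : ℝ) ≤ 2 * v := fun N => by
      rw [Nat.lt_succ_iff]; exact_mod_cast Iff.rfl
    simp only [hcard, bernWeight_eq_prod_rowWeight]
    exact sum_prod_mul_ite_card_le_le_exp (fun r => rowWeight_nonneg hp0.le hp1.le r)
      (sum_rowWeight p) hq (lt_of_le_of_lt (by positivity) hv) hv.le
  simp only [← mem_powersetCard_univ]
  calc
    _ ≤ ∑ I ∈ powersetCard (Δ + 1) univ, ∑ k ∈ I, ∑ C : Fin m → Fin n → Bool, bernWeight p C *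
          (if #{j | C j k = true ∧ ∀ l ∈ I, l ≠ k → C j l = false} < 2 * v + 1 then 1 else 0) :=
      (sum_mul_ite_exists_le hW _ _).trans (sum_le_sum fun I _ => sum_mul_ite_exists_le hW _ _)
    _ ≤ ∑ I ∈ powersetCard (Δ + 1) (univ : Finset (Fin n)), ∑ k ∈ I,
          Real.exp (-(m * π / 2) * (1 - 2 * v / (m * π)) ^ 2) :=
      sum_le_sum fun I hI => sum_le_sum fun k hk => hpair I hI k hk
    _ = _ := by
      rw [sum_congr rfl fun I hI => by rw [sum_const, mem_powersetCard_univ.1 hI], sum_const,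
        card_powersetCard, card_univ, Fintype.card_fin]
      simp only [nsmul_eq_mul, Nat.cast_add, Nat.cast_one]
      ring

theorem stmt19 (m n Δ v : ℕ) (hΔ : Δ + 1 ≤ n) (p : ℝ) (hp0 : 0 < p) (hp1 : p < 1)
    (π : ℝ) (hπ : π = p * (1 - p) ^ Δ) (hv : 2 * (v : ℝ) < m * π) :
    (∑ C : Fin m → Fin n → Bool,
      bernWeight p C *
        (if ∃ I : Finset (Fin n), I.card = Δ + 1 ∧ ∃ k ∈ I,
            (Finset.univ.filter (fun j : Fin m =>
              C j k = true ∧ ∀ l ∈ I, l ≠ k → C j l = false)).card < 2 * v + 1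
         then 1 else 0))
      ≤ (Δ + 1 : ℝ) * (n.choose (Δ + 1) : ℝ) *
          Real.exp (-(m * π / 2) * (1 - 2 * v / (m * π)) ^ 2) :=
  stmt19_general m n Δ v p hp0 hp1 π hπ hv
end
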